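/- Let A be a complex M×N matrix, Y a complex M×L matrix, and μ > 0. A complex N×L matrix X̂ is a global minimizer of the multiple-snapshot objective G(X) = ‖Y − A X‖_F² + μ·Σᵢ ‖Xᵢ·‖₂ if and only if the beamformed residual matrix R = 2·Aᴴ(Y − A X̂) satisfies, for every row index i: if the i-th row X̂ᵢ· is nonzero then Rᵢ· = μ·X̂ᵢ·/‖X̂ᵢ·‖₂, and if X̂ᵢ· = 0 then ‖Rᵢ·‖₂ ≤ μ. -/

import Mathlib

/-!
Write `G(X̂ + D) - G(X̂)` as `‖A D‖_F²` plus a sum over rows of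
`μ (‖x̂ᵢ + dᵢ‖ - ‖x̂ᵢ‖) - ⟪rᵢ, dᵢ⟫`, where `⟪·, ·⟫` is the real inner product `Re ⟨·, ·⟩` of
rows. If every row term is nonnegative, `X̂` is a minimizer. Conversely, perturbing a single row
shows that each row term is bounded below by `-c ‖dᵢ‖²`; the row term is convex in `dᵢ` and
vanishes at `0`, so replacing `dᵢ` by `t dᵢ` and letting `t → 0` removes the quadratic term.
Finally, `⟪r, d⟫ ≤ μ (‖x + d‖ - ‖x‖)` for all `d` says that `r` lies in `μ` times the
subdifferential of the norm at `x`, which is `{μ x / ‖x‖}` for `x ≠ 0` and the closed ball of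
radius `μ` for `x = 0`.
-/

open Matrix

/-- The multiple-snapshot (mixed-norm) LASSO objective ‖Y − A X‖_F² + μ Σᵢ ‖Xᵢ·‖₂. -/
noncomputable def msObj {M N L : ℕ} (A : Matrix (Fin M) (Fin N) ℂ)
    (Y : Matrix (Fin M) (Fin L) ℂ) (μ : ℝ) (X : Matrix (Fin N) (Fin L) ℂ) : ℝ :=
  (∑ i, ∑ j, ‖(Y - A * X) i j‖ ^ 2) + μ * ∑ i, Real.sqrt (∑ j, ‖X i j‖ ^ 2)

/-- The beamformed residual matrix `R = 2 Aᴴ (Y − A X̂)`. -/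
noncomputable def msRes {M N L : ℕ} (A : Matrix (Fin M) (Fin N) ℂ)
    (Y : Matrix (Fin M) (Fin L) ℂ) (Xhat : Matrix (Fin N) (Fin L) ℂ) :
    Matrix (Fin N) (Fin L) ℂ :=
  (2 : ℂ) • (Aᴴ * (Y - A * Xhat))

open Filter Topology WithLp
open scoped InnerProductSpace

theorem convexOn_mul_norm_add_sub_norm {E : Type*} [SeminormedAddCommGroup E] [NormedSpace ℝ E]
    (x : E) {μ : ℝ} (hμ : 0 ≤ μ) : ConvexOn ℝ Set.univ fun d => μ * (‖x + d‖ - ‖x‖) := by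
  simpa [sub_eq_add_neg] using
    (((convexOn_norm convex_univ).translate_right x).add_const (-‖x‖)).smul hμ

theorem ConvexOn.le_of_forall_le_add_mul_norm_sq {E : Type*} [SeminormedAddCommGroup E]
    [NormedSpace ℝ E] {φ : E → ℝ} (hφ : ConvexOn ℝ Set.univ φ) (hφ0 : φ 0 = 0)
    (ℓ : E →ₗ[ℝ] ℝ) {C : ℝ} (h : ∀ d, ℓ d ≤ φ d + C * ‖d‖ ^ 2) (d : E) : ℓ d ≤ φ d := by
  have hsmall : ∀ t ∈ Set.Ioo (0 : ℝ) 1, ℓ d ≤ φ d + t * (C * ‖d‖ ^ 2) := by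
    rintro t ⟨ht0, ht1⟩
    have hconv : φ (t • d) ≤ t * φ d := by
      simpa [hφ0] using hφ.2 (Set.mem_univ d) (Set.mem_univ 0) ht0.le (sub_nonneg.2 ht1.le)
        (add_sub_cancel t 1)
    have hscaled := h (t • d)
    rw [map_smul, smul_eq_mul, norm_smul, Real.norm_of_nonneg ht0.le] at hscaled
    nlinarith
  have hlim : Tendsto (fun t : ℝ => φ d + t * (C * ‖d‖ ^ 2)) (𝓝[>] 0) (𝓝 (φ d)) := by
    have hcont : Continuous fun t : ℝ => φ d + t * (C * ‖d‖ ^ 2) := by fun_prop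
    simpa using (hcont.tendsto 0).mono_left nhdsWithin_le_nhds
  exact ge_of_tendsto hlim (eventually_of_mem (Ioo_mem_nhdsGT one_pos) hsmall)

section NormSubgradient

variable {F : Type*} [NormedAddCommGroup F] [InnerProductSpace ℝ F] {r x : F} {μ : ℝ}

theorem norm_le_of_forall_inner_le (hμ : 0 ≤ μ) (h : ∀ d, ⟪r, d⟫_ℝ ≤ μ * (‖x + d‖ - ‖x‖)) :
    ‖r‖ ≤ μ := by
  have hr : ‖r‖ * ‖r‖ ≤ μ * ‖r‖ := by
    have hrr := h r
    rw [real_inner_self_eq_norm_mul_norm] at hrr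
    nlinarith [norm_add_le x r]
  nlinarith [norm_nonneg r]

theorem forall_inner_le_mul_norm_add_sub_iff (hμ : 0 ≤ μ) :
    (∀ d, ⟪r, d⟫_ℝ ≤ μ * (‖x + d‖ - ‖x‖)) ↔
      (x ≠ 0 → r = (μ / ‖x‖) • x) ∧ (x = 0 → ‖r‖ ≤ μ) := by
  constructor
  · intro h
    refine ⟨fun hx => ?_, fun _ => norm_le_of_forall_inner_le hμ h⟩
    have hx' : 0 < ‖x‖ := norm_pos_iff.2 hx
    have hrx : μ * ‖x‖ ≤ ⟪r, x⟫_ℝ := by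
      have hneg := h (-x)
      rw [add_neg_cancel, norm_zero, inner_neg_right] at hneg
      linarith
    have hr := norm_le_of_forall_inner_le hμ h
    have hzero : ‖r - (μ / ‖x‖) • x‖ ^ 2 ≤ 0 := by
      rw [norm_sub_sq_real, real_inner_smul_right, norm_smul, Real.norm_of_nonneg (by positivity)]
      field_simp
      nlinarith [mul_nonneg hμ (sub_nonneg.2 hrx),
        mul_nonneg (sub_nonneg.2 (pow_le_pow_left₀ (norm_nonneg r) hr 2)) hx'.le]
    rw [← sub_eq_zero, ← norm_eq_zero]
    exact pow_eq_zero_iff two_ne_zero |>.1 (le_antisymm hzero (sq_nonneg _))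
  · rintro ⟨hne, hzero⟩ d
    by_cases hx : x = 0
    · subst hx
      simp only [zero_add, norm_zero, sub_zero]
      calc ⟪r, d⟫_ℝ ≤ ‖r‖ * ‖d‖ := real_inner_le_norm r d
        _ ≤ μ * ‖d‖ := by gcongr; exact hzero rfl
    · have hx' : 0 < ‖x‖ := norm_pos_iff.2 hx
      have hcs : ⟪x, x + d⟫_ℝ ≤ ‖x‖ * ‖x + d‖ := real_inner_le_norm x (x + d)
      rw [inner_add_right, real_inner_self_eq_norm_sq] at hcs
      rw [hne hx, real_inner_smul_left]
      calc μ / ‖x‖ * ⟪x, d⟫_ℝ ≤ μ / ‖x‖ * (‖x‖ * ‖x + d‖ - ‖x‖ ^ 2) := by gcongr; linarith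
        _ = μ * (‖x + d‖ - ‖x‖) := by field_simp

end NormSubgradient

section MatrixRows

variable {𝕜 : Type*} [RCLike 𝕜] {m n l : Type*} [Fintype m] [Fintype n] [Fintype l]

theorem Matrix.trace_conjTranspose_mul_eq_sum_inner (P Q : Matrix n l 𝕜) :
    trace (Pᴴ * Q) = ∑ i, ⟪toLp 2 (P i), toLp 2 (Q i)⟫_𝕜 := by
  simp only [trace, diag_apply, mul_apply, conjTranspose_apply, PiLp.inner_apply,
    RCLike.inner_apply]
  rw [Finset.sum_comm]
  simp [mul_comm]

theorem Matrix.sum_inner_mul_right (A : Matrix m n 𝕜) (E : Matrix m l 𝕜) (D : Matrix n l 𝕜) :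
    ∑ a, ⟪toLp 2 (E a), toLp 2 ((A * D) a)⟫_𝕜 = ∑ i, ⟪toLp 2 ((Aᴴ * E) i), toLp 2 (D i)⟫_𝕜 := by
  rw [← trace_conjTranspose_mul_eq_sum_inner, ← trace_conjTranspose_mul_eq_sum_inner,
    conjTranspose_mul, conjTranspose_conjTranspose, Matrix.mul_assoc]

theorem Matrix.sum_norm_sub_mul_sq (A : Matrix m n 𝕜) (E : Matrix m l 𝕜) (D : Matrix n l 𝕜) :
    ∑ a, ‖toLp 2 ((E - A * D) a)‖ ^ 2 = ∑ a, ‖toLp 2 (E a)‖ ^ 2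
      - 2 * RCLike.re (∑ i, ⟪toLp 2 ((Aᴴ * E) i), toLp 2 (D i)⟫_𝕜)
      + ∑ a, ‖toLp 2 ((A * D) a)‖ ^ 2 := by
  have hsub (a : m) : toLp 2 ((E - A * D) a) = toLp 2 (E a) - toLp 2 ((A * D) a) := rfl
  simp only [hsub, @norm_sub_sq 𝕜, Finset.sum_add_distrib, Finset.sum_sub_distrib,
    ← Finset.mul_sum, ← map_sum, sum_inner_mul_right]

end MatrixRows

theorem Matrix.mul_updateRow_zero {α m n l : Type*} [Semiring α] [Fintype n] [DecidableEq n]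
    (A : Matrix m n α) (i : n) (v : l → α) (a : m) : (A * updateRow 0 i v) a = A a i • v := by
  ext j
  simp [mul_apply, updateRow_apply]

theorem EuclideanSpace.real_inner_eq_re_inner {ι : Type*} [Fintype ι] (x y : EuclideanSpace ℂ ι) :
    ⟪x, y⟫_ℝ = RCLike.re ⟪x, y⟫_ℂ := by
  simp [PiLp.inner_apply, Complex.inner, map_sum]

theorem EuclideanSpace.forall_inner_le_mul_norm_add_sub_iff {ι : Type*} [Fintype ι]
    {r x : ι → ℂ} {μ : ℝ} (hμ : 0 ≤ μ) :
    (∀ d, ⟪toLp 2 r, d⟫_ℝ ≤ μ * (‖toLp 2 x + d‖ - ‖toLp 2 x‖)) ↔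
      (x ≠ 0 → r = (μ / Real.sqrt (∑ j, ‖x j‖ ^ 2)) • x) ∧
        (x = 0 → Real.sqrt (∑ j, ‖r j‖ ^ 2) ≤ μ) := by
  rw [_root_.forall_inner_le_mul_norm_add_sub_iff hμ]
  simp only [ne_eq, EuclideanSpace.norm_eq, ← toLp_smul, (toLp_injective 2).eq_iff, ofLp_zero]

section Objective

variable {M N L : ℕ} (A : Matrix (Fin M) (Fin N) ℂ) (Y : Matrix (Fin M) (Fin L) ℂ) (μ : ℝ)

theorem msObj_eq_sum_norm_row (X : Matrix (Fin N) (Fin L) ℂ) :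
    msObj A Y μ X = ∑ a, ‖toLp 2 ((Y - A * X) a)‖ ^ 2 + μ * ∑ i, ‖toLp 2 (X i)‖ := by
  simp_rw [EuclideanSpace.norm_sq_eq]
  simp [msObj, EuclideanSpace.norm_eq]

theorem msObj_add (Xhat D : Matrix (Fin N) (Fin L) ℂ) :
    msObj A Y μ (Xhat + D) = msObj A Y μ Xhat
      + ∑ i, (μ * (‖toLp 2 (Xhat i) + toLp 2 (D i)‖ - ‖toLp 2 (Xhat i)‖)
        - ⟪toLp 2 (msRes A Y Xhat i), toLp 2 (D i)⟫_ℝ)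
      + ∑ a, ‖toLp 2 ((A * D) a)‖ ^ 2 := by
  have hres : ∑ i, ⟪toLp 2 (msRes A Y Xhat i), toLp 2 (D i)⟫_ℝ
      = 2 * RCLike.re (∑ i, ⟪toLp 2 ((Aᴴ * (Y - A * Xhat)) i), toLp 2 (D i)⟫_ℂ) := by
    have hrow (i : Fin N) :
        toLp 2 (msRes A Y Xhat i) = (2 : ℂ) • toLp 2 ((Aᴴ * (Y - A * Xhat)) i) := rfl
    simp [hrow, EuclideanSpace.real_inner_eq_re_inner, Finset.mul_sum, mul_comm]
  have hadd (i : Fin N) : toLp 2 ((Xhat + D) i) = toLp 2 (Xhat i) + toLp 2 (D i) := rfl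
  rw [msObj_eq_sum_norm_row, msObj_eq_sum_norm_row, Matrix.mul_add, ← sub_sub,
    sum_norm_sub_mul_sq, Finset.sum_sub_distrib, ← Finset.mul_sum, hres]
  simp only [hadd, Finset.sum_sub_distrib]
  ring

theorem msObj_add_updateRow (Xhat : Matrix (Fin N) (Fin L) ℂ) (i : Fin N) (v : Fin L → ℂ) :
    msObj A Y μ (Xhat + updateRow 0 i v) = msObj A Y μ Xhat
      + (μ * (‖toLp 2 (Xhat i) + toLp 2 v‖ - ‖toLp 2 (Xhat i)‖)
        - ⟪toLp 2 (msRes A Y Xhat i), toLp 2 v⟫_ℝ)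
      + (∑ a, ‖A a i‖ ^ 2) * ‖toLp 2 v‖ ^ 2 := by
  rw [msObj_add, Fintype.sum_eq_single i, updateRow_self]
  · simp [mul_updateRow_zero, norm_smul, mul_pow, Finset.sum_mul]
  · intro k hk
    have hzero : toLp 2 ((0 : Matrix (Fin N) (Fin L) ℂ) k) = 0 := rfl
    simp [updateRow_ne hk, hzero]

end Objective

/-- Global optimality condition for the multiple-snapshot LASSO: `X̂` minimizes the
objective iff `Rᵢ· = μ X̂ᵢ·/‖X̂ᵢ·‖₂` on nonzero rows and `‖Rᵢ·‖₂ ≤ μ` on zero rows. -/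
theorem ms_optimality_iff {M N L : ℕ} (A : Matrix (Fin M) (Fin N) ℂ)
    (Y : Matrix (Fin M) (Fin L) ℂ) (μ : ℝ) (hμ : 0 < μ) (Xhat : Matrix (Fin N) (Fin L) ℂ) :
    (∀ X : Matrix (Fin N) (Fin L) ℂ, msObj A Y μ Xhat ≤ msObj A Y μ X) ↔
      (∀ i : Fin N,
        (Xhat i ≠ 0 →
          msRes A Y Xhat i = (μ / Real.sqrt (∑ j, ‖Xhat i j‖ ^ 2)) • Xhat i) ∧
        (Xhat i = 0 → Real.sqrt (∑ j, ‖msRes A Y Xhat i j‖ ^ 2) ≤ μ)) := by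
  simp only [← EuclideanSpace.forall_inner_le_mul_norm_add_sub_iff hμ.le]
  constructor
  · intro hmin i
    refine (convexOn_mul_norm_add_sub_norm (toLp 2 (Xhat i)) hμ.le).le_of_forall_le_add_mul_norm_sq
      (by simp) (innerSL ℝ (toLp 2 (msRes A Y Xhat i))) (C := ∑ a, ‖A a i‖ ^ 2) fun d => ?_
    have hpert := hmin (Xhat + updateRow 0 i (ofLp d))
    rw [msObj_add_updateRow] at hpert
    simp only [toLp_ofLp, ContinuousLinearMap.coe_coe, innerSL_apply_apply] at hpert ⊢
    linarith
  · intro hopt X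
    rw [show X = Xhat + (X - Xhat) by abel, msObj_add]
    exact le_add_of_le_of_nonneg
      (le_add_of_nonneg_right (Finset.sum_nonneg fun i _ => sub_nonneg.2 (hopt i _)))
      (by positivity)
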